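/- The language L = {a^n b^n : n ≥ 1} ∪ {b^n : n ≥ 1} cannot be generated by any external contextual grammar all of whose selection languages are suffix-closed. -/

import Mathlib

/-- An external contextual grammar: a finite list of selection pairs
(selection language, finite list of contexts) and a finite list of axioms. -/
structure ECG (α : Type*) where
  pairs : List (Set (List α) × List (List α × List α))
  axioms : List (List α)

/-- Every context `(u, v)` satisfies `uv ≠ ε`. -/
def ECG.WellFormed {α : Type*} (G : ECG α) : Prop :=
  ∀ p ∈ G.pairs, ∀ c ∈ p.2, c.1 ++ c.2 ≠ []

/-- External derivation step: `x ⟹ u x v` for a context `(u,v)` of a pair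
whose selection language contains `x`. -/
def ECG.Step {α : Type*} (G : ECG α) (x y : List α) : Prop :=
  ∃ p ∈ G.pairs, x ∈ p.1 ∧ ∃ c ∈ p.2, y = c.1 ++ x ++ c.2

/-- The language generated externally: all words derivable from the axioms. -/
def ECG.lang {α : Type*} (G : ECG α) : Set (List α) :=
  { w | ∃ x ∈ G.axioms, Relation.ReflTransGen G.Step x w }

def SuffixClosed {α : Type*} (L : Set (List α)) : Prop :=
  ∀ x y : List α, x ++ y ∈ L → y ∈ L

/-!
Take `w = aⁿbⁿ` with `n` larger than every axiom and every context. Then `w` is obtained by one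
step `x ⟹ u x v` from some `x` of the language; `x = bᵐ` is impossible because `u v` would have to
carry all `n` letters `a`, so `x = aᵐbᵐ`. By suffix-closedness `bᵐ` is selected by the same pair,
so `u bᵐ v` is in the language as well, and comparing the letter counts of `u aᵐbᵐ v = aⁿbⁿ` and
`u bᵐ v` forces `uv = ε`.
-/

open List

namespace ECG

variable {α : Type*} (G : ECG α)

def axiomBound : ℕ :=
  (G.axioms.map length).sum

def contextBound : ℕ :=
  (G.pairs.map fun p => (p.2.map fun c => c.1.length + c.2.length).sum).sum

theorem length_le_axiomBound {x : List α} (hx : x ∈ G.axioms) : x.length ≤ G.axiomBound :=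
  single_le_sum (fun _ _ => Nat.zero_le _) _ (mem_map_of_mem hx)

theorem context_length_le_contextBound {p : Set (List α) × List (List α × List α)}
    {c : List α × List α} (hp : p ∈ G.pairs) (hc : c ∈ p.2) :
    c.1.length + c.2.length ≤ G.contextBound :=
  (single_le_sum (fun _ _ => Nat.zero_le _) _ (mem_map_of_mem hc)).trans <|
    single_le_sum (fun _ _ => Nat.zero_le _) _
      (mem_map_of_mem (f := fun p => (p.2.map fun c => c.1.length + c.2.length).sum) hp)

theorem mem_lang_of_step {x y : List α} (hx : x ∈ G.lang) (h : G.Step x y) : y ∈ G.lang :=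
  let ⟨x₀, hx₀, hd⟩ := hx
  ⟨x₀, hx₀, hd.tail h⟩

theorem exists_step_of_mem_lang {w : List α} (hw : w ∈ G.lang) (hlen : G.axiomBound < w.length) :
    ∃ x ∈ G.lang, G.Step x w := by
  obtain ⟨x₀, hx₀, hd⟩ := hw
  rcases hd.cases_tail with rfl | ⟨x, hxd, hstep⟩
  · exact absurd (G.length_le_axiomBound hx₀) hlen.not_ge
  · exact ⟨x, ⟨x₀, hx₀, hxd⟩, hstep⟩

end ECG

def anbnUnionBn {α : Type*} (a b : α) : Set (List α) :=
  { w | ∃ n ≥ 1, w = replicate n a ++ replicate n b } ∪ { w | ∃ n ≥ 1, w = replicate n b }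

section Counting

variable {α : Type*} [DecidableEq α] {a b : α}

theorem le_length_of_append_replicate_append_eq (hab : a ≠ b) {u v : List α} {m n : ℕ}
    (h : u ++ replicate m b ++ v = replicate n a ++ replicate n b) :
    n ≤ u.length + v.length := by
  have hcount := congrArg (count a) h
  simp only [count_append, count_replicate_self, count_replicate, beq_iff_eq, hab.symm,
    if_false] at hcount
  have := u.count_le_length (a := a)
  have := v.count_le_length (a := a)
  omega

theorem append_eq_nil_of_append_replicate_append_mem (hab : a ≠ b) {u v : List α} {m n : ℕ}
    (hm : 1 ≤ m) (h : u ++ (replicate m a ++ replicate m b) ++ v = replicate n a ++ replicate n b)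
    (h' : u ++ replicate m b ++ v ∈ anbnUnionBn a b) : u ++ v = [] := by
  have hca := congrArg (count a) h
  have hcb := congrArg (count b) h
  simp only [count_append, count_replicate_self, count_replicate, beq_iff_eq, hab, hab.symm,
    if_false] at hca hcb
  rcases h' with ⟨k, -, hk⟩ | ⟨k, -, hk⟩
  · have hka := congrArg (count a) hk
    have hkb := congrArg (count b) hk
    simp only [count_append, count_replicate_self, count_replicate, beq_iff_eq, hab, hab.symm,
      if_false] at hka hkb
    omega
  · have hka := congrArg (count a) hk
    have hlen := congrArg length h
    simp only [count_append, count_replicate, beq_iff_eq, hab.symm, if_false] at hka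
    simp only [length_append, length_replicate] at hlen
    rw [← length_eq_zero_iff, length_append]
    omega

end Counting

theorem stmt_13 {α : Type*} (a b : α) (hab : a ≠ b) :
    ¬ ∃ G : ECG α, G.WellFormed ∧ (∀ p ∈ G.pairs, SuffixClosed p.1) ∧
      G.lang = { w | ∃ n ≥ 1, w = List.replicate n a ++ List.replicate n b } ∪
               { w | ∃ n ≥ 1, w = List.replicate n b } := by
  classical
  rintro ⟨G, hwf, hsc, hL⟩
  change G.lang = anbnUnionBn a b at hL
  set n := G.contextBound + G.axiomBound + 1
  have hw : replicate n a ++ replicate n b ∈ G.lang := hL ▸ Or.inl ⟨n, by omega, rfl⟩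
  obtain ⟨x, hxL, p, hp, hxp, c, hc, hstep⟩ :=
    G.exists_step_of_mem_lang hw (by simp only [length_append, length_replicate]; omega)
  have hcK := G.context_length_le_contextBound hp hc
  rw [hL] at hxL
  rcases hxL with ⟨m, hm, rfl⟩ | ⟨m, -, rfl⟩
  · have hbm : replicate m b ∈ p.1 := hsc p hp _ _ hxp
    have hbL : replicate m b ∈ G.lang := hL ▸ Or.inr ⟨m, hm, rfl⟩
    have hwrap := G.mem_lang_of_step hbL ⟨p, hp, hbm, c, hc, rfl⟩
    rw [hL] at hwrap
    exact hwf p hp c hc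
      (append_eq_nil_of_append_replicate_append_mem hab hm hstep.symm hwrap)
  · have := le_length_of_append_replicate_append_eq hab hstep.symm
    omega
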